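/- Let Φ = {ψ₁, …, ψₙ} be a finite set of satisfiable propositional formulas, and let N := Σᵢ ⟨ψᵢ⟩ be the total number of variable occurrences. Then there exists a partition Φ = Φ₁ ∪ … ∪ Φ_m into nonempty blocks such that m · log₂ m ≤ N and, for every j, the conjunction of all formulas in Φⱼ is satisfiable. -/

import Mathlib

/-- Propositional formulas over countably many variables. -/
inductive PropForm where
  | var : ℕ → PropForm
  | tru : PropForm
  | fls : PropForm
  | neg : PropForm → PropForm
  | conj : PropForm → PropForm → PropForm
  | disj : PropForm → PropForm → PropForm

def PropForm.eval (θ : ℕ → Bool) : PropForm → Bool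
  | .var v => θ v
  | .tru => true
  | .fls => false
  | .neg φ => !(φ.eval θ)
  | .conj φ ψ => φ.eval θ && ψ.eval θ
  | .disj φ ψ => φ.eval θ || ψ.eval θ

/-- `⟨ψ⟩`: the number of occurrences of variables in `ψ`. -/
def PropForm.varCount : PropForm → ℕ
  | .var _ => 1
  | .tru => 0
  | .fls => 0
  | .neg φ => φ.varCount
  | .conj φ ψ => φ.varCount + ψ.varCount
  | .disj φ ψ => φ.varCount + ψ.varCount

/-!
Start from the partition into singletons and merge two blocks as long as their union is
satisfiable; a partition with the least number `m` of blocks then has pairwise contradicting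
blocks. If block `j` mentions the set `Wⱼ` of variables, at least a `2 ^ (-|Wⱼ|)` fraction of
all assignments satisfies it, and these sets of assignments are disjoint, so
`∑ⱼ 2 ^ (-|Wⱼ|) ≤ 1`. Convexity of `x ↦ 2 ^ (-x)` turns this into `m log₂ m ≤ ∑ⱼ |Wⱼ| ≤ N`.
-/

open Finset

theorem card_mul_logb_card_le_sum {ι : Type*} [Fintype ι] (x : ι → ℝ)
    (hx : ∑ i, (2 : ℝ) ^ (-x i) ≤ 1) :
    (Fintype.card ι : ℝ) * Real.logb 2 (Fintype.card ι) ≤ ∑ i, x i := by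
  obtain hι | hι := isEmpty_or_nonempty ι
  · simp
  set m : ℝ := (Fintype.card ι : ℝ)
  have hm : 0 < m := by positivity
  have hlog2 : 0 < Real.log 2 := Real.log_pos one_lt_two
  -- Jensen: `2 ^ (-(∑ xᵢ) / m) ≤ (∑ 2 ^ (-xᵢ)) / m ≤ 1 / m`
  have hJensen := convexOn_exp.map_sum_le (t := univ) (w := fun _ => m⁻¹)
    (p := fun i => -(Real.log 2 * x i)) (fun _ _ => by positivity)
    (by simp [m]) (fun _ _ => Set.mem_univ _)
  simp only [smul_eq_mul, ← mul_sum, ← Real.rpow_def_of_pos two_pos, ← mul_neg] at hJensen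
  have : Real.exp (-(Real.log 2 * ∑ i, x i) / m) ≤ Real.exp (-Real.log m) := by
    rw [Real.exp_neg, Real.exp_log hm]
    calc _ = Real.exp (m⁻¹ * (Real.log 2 * ∑ i, -x i)) := by
            rw [sum_neg_distrib]; ring_nf
      _ ≤ m⁻¹ * ∑ i, (2 : ℝ) ^ (-x i) := hJensen
      _ ≤ m⁻¹ := mul_le_of_le_one_right (by positivity) hx
  rw [Real.exp_le_exp, neg_div, neg_le_neg_iff, le_div_iff₀ hm] at this
  rw [Real.logb, mul_div_assoc', div_le_iff₀ hlog2]
  linarith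

-- An assignment to the variables of `V` is encoded by the set of variables it makes true.
theorem two_pow_card_sdiff_le_card_filter_powerset {α : Type*} [DecidableEq α]
    {V W : Finset α} (hWV : W ⊆ V) {p : (α → Bool) → Prop} [DecidablePred p]
    (hp : DependsOn p W) {θ : α → Bool} (hθ : p θ) :
    2 ^ #(V \ W) ≤ #{S ∈ V.powerset | p (· ∈ S)} := by
  set T := W.filter (θ · = true)
  have hdisj : ∀ U ∈ (V \ W).powerset, Disjoint U T := fun U hU =>
    disjoint_of_subset_left (mem_powerset.1 hU)
      (disjoint_sdiff_self_left.mono_right (filter_subset _ _))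
  have hinj : Set.InjOn (· ∪ T) ((V \ W).powerset : Set (Finset α)) := fun U₁ hU₁ U₂ hU₂ h => by
    rw [← union_sdiff_cancel_right (hdisj U₁ hU₁), ← union_sdiff_cancel_right (hdisj U₂ hU₂)]
    exact congrArg (· \ T) h
  rw [← card_powerset, ← card_image_of_injOn hinj]
  refine card_le_card fun S hS => ?_
  obtain ⟨U, hU, rfl⟩ := mem_image.1 hS
  rw [mem_powerset] at hU
  refine mem_filter.2 ⟨mem_powerset.2 (union_subset (hU.trans sdiff_subset)
    ((filter_subset _ _).trans hWV)), ?_⟩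
  refine (hp fun v hv => ?_).mpr hθ
  have : v ∉ U := fun hvU => (mem_sdiff.1 (hU hvU)).2 hv
  simp [T, this, mem_coe.1 hv]

theorem sum_two_rpow_neg_card_le_one {α ι : Type*} [DecidableEq α] [Fintype ι]
    (p : ι → (α → Bool) → Prop) (W : ι → Finset α) (hp : ∀ j, DependsOn (p j) (W j))
    (hsat : ∀ j, ∃ θ, p j θ) (hdisj : Pairwise fun j j' => ∀ θ, p j θ → ¬ p j' θ) :
    ∑ j, (2 : ℝ) ^ (-(#(W j) : ℝ)) ≤ 1 := by
  classical
  set V := univ.biUnion W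
  have hWV : ∀ j, W j ⊆ V := fun j => subset_biUnion_of_mem W (mem_univ j)
  set A : ι → Finset (Finset α) := fun j => {S ∈ V.powerset | p j (· ∈ S)}
  have hA : ∀ j, 2 ^ #(V \ W j) ≤ #(A j) := fun j =>
    let ⟨_, hθ⟩ := hsat j
    two_pow_card_sdiff_le_card_filter_powerset (hWV j) (hp j) hθ
  have hAdisj : ((univ : Finset ι) : Set ι).PairwiseDisjoint A := fun j _ j' _ hjj' =>
    disjoint_filter.2 fun S _ hS => hdisj hjj' _ hS
  have hsum : ∑ j, 2 ^ #(V \ W j) ≤ 2 ^ #V := calc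
    ∑ j, 2 ^ #(V \ W j) ≤ ∑ j, #(A j) := sum_le_sum fun j _ => hA j
    _ = #(univ.biUnion A) := (card_biUnion hAdisj).symm
    _ ≤ #V.powerset := card_le_card (biUnion_subset.2 fun j _ => filter_subset _ _)
    _ = 2 ^ #V := card_powerset V
  have hterm : ∀ j, (2 : ℝ) ^ (-(#(W j) : ℝ)) = 2 ^ #(V \ W j) / 2 ^ #V := fun j => by
    rw [← card_sdiff_add_card_eq_card (hWV j), pow_add, Real.rpow_neg zero_le_two,
      Real.rpow_natCast]
    field_simp
  simp_rw [hterm, ← sum_div]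
  rw [div_le_one (by positivity)]
  exact_mod_cast hsum

namespace PropForm

def vars : PropForm → Finset ℕ
  | .var v => {v}
  | .tru | .fls => ∅
  | .neg φ => φ.vars
  | .conj φ ψ | .disj φ ψ => φ.vars ∪ ψ.vars

theorem card_vars_le_varCount (φ : PropForm) : #φ.vars ≤ φ.varCount := by
  induction φ with
  | var v => simp [vars, varCount]
  | tru | fls => simp [vars, varCount]
  | neg φ ih => exact ih
  | conj φ ψ ihφ ihψ | disj φ ψ ihφ ihψ =>
    exact (card_union_le _ _).trans (Nat.add_le_add ihφ ihψ)

theorem dependsOn_eval (φ : PropForm) : DependsOn (fun θ => φ.eval θ) φ.vars := by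
  intro θ θ' h
  induction φ with
  | var v => exact h v (by simp [vars])
  | tru | fls => rfl
  | neg φ ih => simp only [eval, ih h]
  | conj φ ψ ihφ ihψ | disj φ ψ ihφ ihψ =>
    simp only [vars, coe_union, Set.mem_union] at h
    simp only [eval, ihφ fun v hv => h v (.inl hv), ihψ fun v hv => h v (.inr hv)]

end PropForm

section Partition

variable {ι β γ : Type*} (ψ : ι → PropForm) (P : ι → β)

def BlockHolds (b : β) (θ : ℕ → Bool) : Prop :=
  ∀ i, P i = b → (ψ i).eval θ = true

def IsSatPartition : Prop :=
  Function.Surjective P ∧ ∀ b, ∃ θ, BlockHolds ψ P b θ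

def blockVars [Fintype ι] [DecidableEq β] (b : β) : Finset ℕ :=
  ({i | P i = b} : Finset ι).biUnion fun i => (ψ i).vars

theorem dependsOn_blockHolds [Fintype ι] [DecidableEq β] (b : β) :
    DependsOn (BlockHolds ψ P b) (blockVars ψ P b) := fun θ θ' h =>
  propext <| forall₂_congr fun i hi => iff_of_eq <| congrArg (· = true) <|
    (ψ i).dependsOn_eval fun v hv => h v (by simpa [blockVars] using ⟨i, hi, hv⟩)

theorem sum_card_blockVars_le [Fintype ι] [Fintype β] [DecidableEq β] :
    ∑ b, #(blockVars ψ P b) ≤ ∑ i, (ψ i).varCount := calc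
  ∑ b, #(blockVars ψ P b) ≤ ∑ b, ∑ i with P i = b, (ψ i).varCount :=
    sum_le_sum fun _ _ => card_biUnion_le.trans
      (sum_le_sum fun i _ => (ψ i).card_vars_le_varCount)
  _ = ∑ i, (ψ i).varCount := sum_fiberwise _ _ _

theorem card_mul_logb_card_le_sum_varCount [Fintype ι] [Fintype β]
    (hsat : ∀ b, ∃ θ, BlockHolds ψ P b θ)
    (hincons : Pairwise fun b b' => ∀ θ, BlockHolds ψ P b θ → ¬ BlockHolds ψ P b' θ) :
    (Fintype.card β : ℝ) * Real.logb 2 (Fintype.card β) ≤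
      ((∑ i, (ψ i).varCount : ℕ) : ℝ) := by
  classical
  calc _ ≤ ∑ b, (#(blockVars ψ P b) : ℝ) :=
        card_mul_logb_card_le_sum _ <| sum_two_rpow_neg_card_le_one _ _
          (dependsOn_blockHolds ψ P) hsat hincons
    _ ≤ _ := by exact_mod_cast sum_card_blockVars_le ψ P

variable {ψ P}

theorem IsSatPartition.comp_equiv (hP : IsSatPartition ψ P) (e : β ≃ γ) :
    IsSatPartition ψ (e ∘ P) := by
  refine ⟨e.surjective.comp hP.1, fun c => ?_⟩
  obtain ⟨θ, hθ⟩ := hP.2 (e.symm c)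
  exact ⟨θ, fun i hi => hθ i (e.eq_symm_apply.2 hi)⟩

theorem IsSatPartition.merge [DecidableEq β] (hP : IsSatPartition ψ P) {b b' : β} (hne : b ≠ b')
    {θ : ℕ → Bool} (hb : BlockHolds ψ P b θ) (hb' : BlockHolds ψ P b' θ) :
    IsSatPartition ψ fun i =>
      (⟨if P i = b' then b else P i, by split_ifs <;> assumption⟩ : {c // c ≠ b'}) := by
  refine ⟨fun c => ?_, fun c => ?_⟩
  · obtain ⟨i, hi⟩ := hP.1 c
    exact ⟨i, Subtype.ext (by simp [hi, c.2])⟩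
  by_cases hc : c.1 = b
  · refine ⟨θ, fun i hi => ?_⟩
    replace hi : (if P i = b' then b else P i) = c := congrArg Subtype.val hi
    split_ifs at hi with hi'
    · exact hb' i hi'
    · exact hb i (hi.trans hc)
  · obtain ⟨θ', hθ'⟩ := hP.2 c
    refine ⟨θ', fun i hi => hθ' i ?_⟩
    replace hi : (if P i = b' then b else P i) = c := congrArg Subtype.val hi
    split_ifs at hi
    · exact absurd hi.symm hc
    · exact hi

theorem exists_isSatPartition_fin_pairwise_inconsistent [Fintype ι]
    (hsat : ∀ i, ∃ θ, (ψ i).eval θ = true) :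
    ∃ (m : ℕ) (P : ι → Fin m), IsSatPartition ψ P ∧
      Pairwise fun b b' => ∀ θ, BlockHolds ψ P b θ → ¬ BlockHolds ψ P b' θ := by
  classical
  have hex : ∃ m, ∃ P : ι → Fin m, IsSatPartition ψ P :=
    ⟨_, _, IsSatPartition.comp_equiv (P := id) ⟨Function.surjective_id, fun i =>
      let ⟨θ, hθ⟩ := hsat i; ⟨θ, fun j (hj : j = i) => hj ▸ hθ⟩⟩ (Fintype.equivFin ι)⟩
  obtain ⟨P, hP⟩ := Nat.find_spec hex
  refine ⟨_, P, hP, fun b b' hne θ hb hb' => Nat.find_min hex ?_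
    ⟨_, (hP.merge hne hb hb').comp_equiv (Fintype.equivFin _)⟩⟩
  simp only [ne_eq, Fintype.card_subtype_compl, Fintype.card_fin, Fintype.card_unique]
  have := b.pos
  omega

end Partition

/-- Let `Φ = {ψ₁, …, ψₙ}` be satisfiable propositional formulas with `N` total variable
occurrences.  Then `Φ` can be partitioned into `m` (nonempty) blocks — given by a
surjection `P : Fin n → Fin m` — such that `m · log₂ m ≤ N` and the conjunction of the
formulas in each block is satisfiable. -/
theorem merge_partition (n : ℕ) (ψ : Fin n → PropForm)
    (hsat : ∀ i, ∃ θ, (ψ i).eval θ = true) :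
    ∃ (m : ℕ) (P : Fin n → Fin m),
      Function.Surjective P ∧
      (m : ℝ) * Real.logb 2 m ≤ ((∑ i, (ψ i).varCount : ℕ) : ℝ) ∧
      ∀ j : Fin m, ∃ θ, ∀ i, P i = j → (ψ i).eval θ = true := by
  obtain ⟨m, P, ⟨hsurj, hblocks⟩, hincons⟩ :=
    exists_isSatPartition_fin_pairwise_inconsistent hsat
  refine ⟨m, P, hsurj, ?_, hblocks⟩
  simpa using card_mul_logb_card_le_sum_varCount ψ P hblocks hincons
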